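/- For every continuous function φ : S¹ → ℂ, the commutators of u_t with the multiplication operator M_φ on L²(S¹) satisfy ‖u_t M_φ − M_φ u_t‖ → 0 as t → ∞. -/

import Mathlib

open Complex Real Filter MeasureTheory AddCircle

instance : Fact ((0 : ℝ) < 1) := ⟨one_pos⟩

/-- `L²(S¹)`, realized as the `L²` space of the circle `ℝ/ℤ` with its normalized Haar
measure; the Fourier orthonormal basis is `(fourierLp 2 n)_{n ∈ ℤ}`. -/
noncomputable abbrev L2Circle : Type := Lp ℂ 2 (@haarAddCircle 1 _)

/-!
Approximate `φ` uniformly by trigonometric polynomials. Since `ψ ↦ [u_t, M_ψ]` is linear in `ψ`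
and bounded uniformly in `t` (`‖u_t‖ ≤ 1`), it suffices to show `‖[u_t, M_{e_k}]‖ → 0` for each
character `e_k`. In the Fourier basis, `[u_t, M_{e_k}]` is the shift `δ_n ↦ δ_{n+k}` weighted by
`λ_t(n + k) - λ_t(n)`, where `λ_t(n) = exp(2πi·c_t(n)/t)` with `c_t(n)` the clamp of `n` to
`[0, t]` (the value `1` for `n > t` is `exp(2πi)`). As `c_t` is 1-Lipschitz, these weights are at
most `2π|k|/t`.
-/

open scoped ENNReal InnerProductSpace Topology

namespace HilbertBasis

variable {ι ι' 𝕜 E F : Type*} [RCLike 𝕜] [NormedAddCommGroup E] [InnerProductSpace 𝕜 E]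
  [NormedAddCommGroup F] [InnerProductSpace 𝕜 F]

theorem hasSum_norm_inner_sq (b : HilbertBasis ι 𝕜 E) (x : E) :
    HasSum (fun i => ‖⟪b i, x⟫_𝕜‖ ^ 2) (‖x‖ ^ 2) := by
  have h := lp.hasSum_norm (p := 2) (by norm_num) (b.repr x)
  simpa only [ENNReal.toReal_ofNat, Real.rpow_two, LinearIsometryEquiv.norm_map,
    HilbertBasis.repr_apply_apply] using h

theorem inner_apply_eq_of_apply_eq_smul (b : HilbertBasis ι 𝕜 E) (b' : HilbertBasis ι' 𝕜 F)
    (σ : ι ≃ ι') {c : ι → 𝕜} {T : E →L[𝕜] F} (hT : ∀ i, T (b i) = c i • b' (σ i)) (i : ι)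
    (x : E) : ⟪b' (σ i), T x⟫_𝕜 = c i * ⟪b i, x⟫_𝕜 := by
  classical
  have h : (innerSL 𝕜 (b' (σ i))).comp T = c i • innerSL 𝕜 (b i) := by
    refine ContinuousLinearMap.ext_on
      (Submodule.dense_iff_topologicalClosure_eq_top.mpr b.dense_span) ?_
    rintro _ ⟨j, rfl⟩
    simp only [ContinuousLinearMap.comp_apply, innerSL_apply_apply, hT, inner_smul_right,
      FunLike.coe_smul, Pi.smul_apply, smul_eq_mul, orthonormal_iff_ite.mp b.orthonormal,
      orthonormal_iff_ite.mp b'.orthonormal, σ.apply_eq_iff_eq]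
    split_ifs with hij <;> simp [hij]
  simpa using congr($h x)

theorem opNorm_le_of_apply_eq_smul (b : HilbertBasis ι 𝕜 E) (b' : HilbertBasis ι' 𝕜 F)
    (σ : ι ≃ ι') {c : ι → 𝕜} {C : ℝ} (hC : 0 ≤ C) (hc : ∀ i, ‖c i‖ ≤ C) {T : E →L[𝕜] F}
    (hT : ∀ i, T (b i) = c i • b' (σ i)) :
    ‖T‖ ≤ C := by
  refine T.opNorm_le_bound hC fun x => ?_
  have hTx := σ.hasSum_iff.mpr (b'.hasSum_norm_inner_sq (T x))
  simp only [Function.comp_def, inner_apply_eq_of_apply_eq_smul b b' σ hT, norm_mul,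
    mul_pow] at hTx
  have hsq : ‖T x‖ ^ 2 ≤ (C * ‖x‖) ^ 2 := by
    rw [mul_pow]
    refine hasSum_le (fun i => ?_) hTx ((b.hasSum_norm_inner_sq x).mul_left (C ^ 2))
    gcongr
    exact hc i
  exact (pow_le_pow_iff_left₀ (norm_nonneg _) (by positivity) two_ne_zero).mp hsq

end HilbertBasis

theorem ContinuousLinearMap.tendsto_apply_of_dense_span {ι 𝕜 E F : Type*}
    [NontriviallyNormedField 𝕜] [SeminormedAddCommGroup E] [NormedSpace 𝕜 E]
    [SeminormedAddCommGroup F] [NormedSpace 𝕜 F] {T : ι → E →L[𝕜] F} {l : Filter ι} {C : ℝ}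
    (hT : ∀ᶠ i in l, ‖T i‖ ≤ C) {s : Set E} (hs : (Submodule.span 𝕜 s).topologicalClosure = ⊤)
    (h : ∀ x ∈ s, Tendsto (fun i => T i x) l (𝓝 0)) (x : E) :
    Tendsto (fun i => T i x) l (𝓝 0) := by
  let S : Submodule 𝕜 E :=
    { carrier := {x | Tendsto (fun i => T i x) l (𝓝 0)}
      add_mem' := fun hx hy => by simpa using hx.add hy
      zero_mem' := by simp [tendsto_const_nhds]
      smul_mem' := fun a x hx => by simpa using hx.const_smul a }
  have hsS : Submodule.span 𝕜 s ≤ S := Submodule.span_le.mpr h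
  have hS : IsClosed (S : Set E) := by
    refine isClosed_of_closure_subset fun x hx => ?_
    obtain ⟨C', hC'0, hTC'⟩ : ∃ C' > 0, ∀ᶠ i in l, ‖T i‖ ≤ C' :=
      ⟨max C 1, by positivity, hT.mono fun i hi => hi.trans (le_max_left _ _)⟩
    show Tendsto _ _ _
    rw [Metric.tendsto_nhds]
    intro ε hε
    obtain ⟨y, hyS, hxy⟩ := Metric.mem_closure_iff.mp hx (ε / (2 * C')) (by positivity)
    filter_upwards [hTC', Metric.tendsto_nhds.mp hyS (ε / 2) (half_pos hε)] with i hiC hiy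
    rw [dist_zero_right] at hiy ⊢
    rw [dist_eq_norm] at hxy
    calc ‖T i x‖ ≤ ‖T i (x - y)‖ + ‖T i y‖ := by
          simpa using norm_add_le (T i (x - y)) (T i y)
      _ ≤ C' * ‖x - y‖ + ‖T i y‖ := by gcongr; exact (T i).le_of_opNorm_le hiC _
      _ < C' * (ε / (2 * C')) + ε / 2 := by gcongr
      _ = ε := by field_simp; ring
  exact Submodule.topologicalClosure_minimal _ hsS hS (hs ▸ Submodule.mem_top)

namespace ContinuousMap

variable {α 𝕜 : Type*} [TopologicalSpace α] [CompactSpace α] [MeasurableSpace α] [BorelSpace α]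
  [NontriviallyNormedField 𝕜] [SecondCountableTopologyEither α 𝕜] (p : ℝ≥0∞) [Fact (1 ≤ p)]
  (μ : Measure α) [IsFiniteMeasure μ]

noncomputable def mulLp : C(α, 𝕜) →L[𝕜] Lp 𝕜 p μ →L[𝕜] Lp 𝕜 p μ :=
  ((ContinuousLinearMap.mul 𝕜 𝕜).holderL μ ∞ p p).comp (toLp ∞ μ 𝕜)

variable {p μ}

theorem coeFn_mulLp (ψ : C(α, 𝕜)) (f : Lp 𝕜 p μ) :
    mulLp p μ ψ f =ᵐ[μ] fun x => ψ x * f x := by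
  filter_upwards [(ContinuousLinearMap.mul 𝕜 𝕜).coeFn_holder (r := p) (toLp ∞ μ 𝕜 ψ) f,
    coeFn_toLp (p := ∞) (𝕜 := 𝕜) μ ψ] with x hx hψ
  simp only [mulLp, ContinuousLinearMap.comp_apply, ContinuousLinearMap.holderL_apply_apply, hx,
    hψ, ContinuousLinearMap.mul_apply']

theorem eq_mulLp_of_ae {ψ : C(α, 𝕜)} {M : Lp 𝕜 p μ →L[𝕜] Lp 𝕜 p μ}
    (hM : ∀ f : Lp 𝕜 p μ, M f =ᵐ[μ] fun x => ψ x * f x) : M = mulLp p μ ψ := by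
  ext1 f
  exact Lp.ext ((hM f).trans (coeFn_mulLp ψ f).symm)

end ContinuousMap

theorem Complex.norm_exp_I_mul_ofReal_sub_exp_I_mul_ofReal_le (a b : ℝ) :
    ‖exp (I * a) - exp (I * b)‖ ≤ |a - b| := by
  calc ‖exp (I * a) - exp (I * b)‖ = ‖exp (I * b)‖ * ‖exp (I * ↑(a - b)) - 1‖ := by
        rw [← norm_mul, mul_sub, ← Complex.exp_add]; push_cast; ring_nf
    _ ≤ 1 * |a - b| := by
        rw [mul_comm I, norm_exp_ofReal_mul_I]
        gcongr
        exact norm_exp_I_mul_ofReal_sub_one_le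
    _ = |a - b| := one_mul _

noncomputable def phaseWeight (t : ℝ) (n : ℤ) : ℂ :=
  if 0 ≤ n ∧ (n : ℝ) ≤ t then Complex.exp (2 * Real.pi * Complex.I * n / t) else 1

theorem phaseWeight_eq_exp_projIcc {t : ℝ} (ht : 0 < t) (n : ℤ) :
    phaseWeight t n = exp (I * ↑(2 * π * Set.projIcc 0 t ht.le n / t)) := by
  unfold phaseWeight
  split_ifs with h
  · rw [Set.projIcc_of_mem _ ⟨by exact_mod_cast h.1, h.2⟩]
    push_cast; ring_nf
  · rcases not_and_or.mp h with hn | hn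
    · rw [Set.projIcc_of_le_left _ (by exact_mod_cast (not_le.mp hn).le)]
      simp
    · rw [Set.projIcc_of_right_le _ (not_le.mp hn).le]
      simp [ht.ne', mul_comm I, exp_two_pi_mul_I]

theorem norm_phaseWeight {t : ℝ} (ht : 0 < t) (n : ℤ) : ‖phaseWeight t n‖ = 1 := by
  rw [phaseWeight_eq_exp_projIcc ht, mul_comm I, norm_exp_ofReal_mul_I]

theorem norm_phaseWeight_add_sub_le {t : ℝ} (ht : 0 < t) (n k : ℤ) :
    ‖phaseWeight t (n + k) - phaseWeight t n‖ ≤ 2 * π * |(k : ℝ)| / t := by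
  rw [phaseWeight_eq_exp_projIcc ht, phaseWeight_eq_exp_projIcc ht]
  refine (norm_exp_I_mul_ofReal_sub_exp_I_mul_ofReal_le _ _).trans ?_
  have h := Set.abs_projIcc_sub_projIcc ht.le (c := ((n + k : ℤ) : ℝ)) (d := n)
  rw [← sub_div, ← mul_sub, abs_div, abs_mul, abs_of_pos ht, abs_of_pos (by positivity)]
  push_cast at h ⊢
  rw [add_sub_cancel_left] at h
  exact div_le_div_of_nonneg_right (mul_le_mul_of_nonneg_left h (by positivity)) ht.le

section Circle

variable {T : ℝ} [Fact (0 < T)] {p : ℝ≥0∞} [Fact (1 ≤ p)]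

theorem mulLp_fourier_fourierLp (k n : ℤ) :
    ContinuousMap.mulLp p haarAddCircle (fourier k) (fourierLp (T := T) p n) =
      fourierLp p (n + k) := by
  refine Lp.ext ?_
  filter_upwards [ContinuousMap.coeFn_mulLp (fourier k) (fourierLp (T := T) p n),
    coeFn_fourierLp p n, coeFn_fourierLp p (n + k)] with x hx hn hnk
  rw [hx, hn, hnk, fourier_add, mul_comm]

theorem commutator_mulLp_fourier_apply_fourierLp
    {U : Lp ℂ p (haarAddCircle (T := T)) →L[ℂ] Lp ℂ p (haarAddCircle (T := T))} {w : ℤ → ℂ}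
    (hU : ∀ n, U (fourierLp (T := T) p n) = w n • fourierLp p n) (k n : ℤ) :
    (U ∘L ContinuousMap.mulLp p haarAddCircle (fourier k) -
        ContinuousMap.mulLp p haarAddCircle (fourier k) ∘L U) (fourierLp p n) =
      (w (n + k) - w n) • fourierLp p (n + k) := by
  simp [mulLp_fourier_fourierLp, hU, sub_smul]

variable {t : ℝ} {U : Lp ℂ 2 (haarAddCircle (T := T)) →L[ℂ] Lp ℂ 2 (haarAddCircle (T := T))}

theorem norm_le_one_of_apply_fourierLp_eq_phaseWeight_smul (ht : 0 < t)
    (hU : ∀ n, U (fourierLp 2 n) = phaseWeight t n • fourierLp 2 n) : ‖U‖ ≤ 1 :=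
  fourierBasis.opNorm_le_of_apply_eq_smul fourierBasis (Equiv.refl ℤ) zero_le_one
    (fun n => (norm_phaseWeight ht n).le)
    (by simpa only [coe_fourierBasis, Equiv.refl_apply] using hU)

theorem norm_commutator_mulLp_fourier_le (ht : 0 < t)
    (hU : ∀ n, U (fourierLp 2 n) = phaseWeight t n • fourierLp 2 n) (k : ℤ) :
    ‖U ∘L ContinuousMap.mulLp 2 haarAddCircle (fourier k) -
        ContinuousMap.mulLp 2 haarAddCircle (fourier k) ∘L U‖ ≤ 2 * π * |(k : ℝ)| / t := by
  refine fourierBasis.opNorm_le_of_apply_eq_smul fourierBasis (Equiv.addRight k) (by positivity)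
    (fun n => norm_phaseWeight_add_sub_le ht n k) fun n => ?_
  rw [coe_fourierBasis, Equiv.coe_addRight]
  exact commutator_mulLp_fourier_apply_fourierLp hU k n

end Circle

/-- For every continuous `φ : S¹ → ℂ`, the commutator of `u_t` (the diagonal unitary with
`u_t δ_n = e^{2πin/t} δ_n` for `0 ≤ n ≤ t` and `u_t δ_n = δ_n` otherwise) with the
multiplication operator `M_φ` on `L²(S¹)` satisfies `‖u_t M_φ - M_φ u_t‖ → 0` as `t → ∞`. -/
theorem commutator_with_multiplication_tendsto_zero
    (φ : AddCircle (1 : ℝ) → ℂ) (hφ : Continuous φ)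
    (M : L2Circle →L[ℂ] L2Circle)
    (hM : ∀ ξ : L2Circle, (⇑(M ξ)) =ᵐ[@haarAddCircle 1 _] fun x => φ x * ξ x)
    (U : ℝ → (L2Circle →L[ℂ] L2Circle))
    (hU : ∀ t : ℝ, 1 ≤ t → ∀ n : ℤ,
      U t (fourierLp 2 n) =
        (if 0 ≤ n ∧ (n : ℝ) ≤ t then Complex.exp (2 * Real.pi * Complex.I * n / t) else 1) •
          fourierLp 2 n) :
    Tendsto (fun t : ℝ => ‖U t ∘L M - M ∘L U t‖) atTop (nhds 0) := by
  let A := ContinuousMap.mulLp 2 (haarAddCircle (T := 1)) (𝕜 := ℂ)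
  let commutator : ℝ → C(AddCircle (1 : ℝ), ℂ) →L[ℂ] L2Circle →L[ℂ] L2Circle := fun t =>
    (ContinuousLinearMap.mul ℂ _ (U t) - (ContinuousLinearMap.mul ℂ _).flip (U t)) ∘L A
  have hU' : ∀ t, 1 ≤ t → ∀ n, U t (fourierLp 2 n) = phaseWeight t n • fourierLp 2 n := hU
  have hbound : ∀ᶠ t in atTop, ‖commutator t‖ ≤ 2 * ‖A‖ := by
    filter_upwards [eventually_ge_atTop 1] with t ht
    have hUt := norm_le_one_of_apply_fourierLp_eq_phaseWeight_smul (by linarith) (hU' t ht)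
    refine (commutator t).opNorm_le_bound (by positivity) fun ψ => ?_
    calc ‖U t * A ψ - A ψ * U t‖ ≤ ‖U t‖ * ‖A ψ‖ + ‖A ψ‖ * ‖U t‖ :=
          norm_sub_le_of_le (norm_mul_le _ _) (norm_mul_le _ _)
      _ ≤ 1 * (‖A‖ * ‖ψ‖) + (‖A‖ * ‖ψ‖) * 1 := by gcongr <;> exact A.le_opNorm ψ
      _ = 2 * ‖A‖ * ‖ψ‖ := by ring
  have hfourier : ∀ k, Tendsto (fun t => commutator t (fourier k)) atTop (𝓝 0) := fun k =>
    squeeze_zero_norm'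
      (by
        filter_upwards [eventually_ge_atTop 1] with t ht
        exact norm_commutator_mulLp_fourier_le (by linarith) (hU' t ht) k)
      (tendsto_const_nhds.div_atTop tendsto_id)
  rw [ContinuousMap.eq_mulLp_of_ae (ψ := ⟨φ, hφ⟩) hM]
  exact tendsto_zero_iff_norm_tendsto_zero.mp <|
    ContinuousLinearMap.tendsto_apply_of_dense_span hbound span_fourier_closure_eq_top
      (by rintro _ ⟨k, rfl⟩; exact hfourier k) ⟨φ, hφ⟩
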